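/- arXiv:1007.4040 — 2 statements merged into one kernel-verified Lean document; each statement's English description precedes it below -/
import Mathlib

section
/- If the dl-program K = (O,P) mentions no occurrence of the constraining operator ⊖ (so all dl-atoms in P are monotonic), then an interpretation I ⊆ HB_P is a canonical answer set of K if and only if I is a strong answer set of K. -/
namespace DLP

/-- The three dl-atom input operators ⊕, ⊙, ⊖. -/
inductive Op | oplus | odot | ominus

/-- An abstract dl-atom `DL[S₁ op₁ p₁, …; Q](t)`: a list of inputs together with
the entailment check `O ∪ A ⊨ Q(t)` applied to a set of (possibly negated) assertions. -/
structure DLA (Conc Pred Arg : Type) where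
  inputs : List (Conc × Op × Pred)
  entails : Set (Conc × Arg × Bool) → Prop

variable {Conc Pred Arg : Type}

/-- Atoms of the Herbrand base: predicate applied to an argument tuple. -/
abbrev Atom (Pred Arg : Type) := Pred × Arg

/-- Interpretations are subsets of the Herbrand base. -/
abbrev Interp (Pred Arg : Type) := Set (Atom Pred Arg)

/-- Extension of a predicate under an interpretation. -/
def extOf (I : Interp Pred Arg) : Pred → Set Arg := fun p => {e | (p, e) ∈ I}

/-- The assertions contributed by one input entry, given predicate extensions. -/
def contrib (ext : Pred → Set Arg) : Conc × Op × Pred → Set (Conc × Arg × Bool)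
  | (S, Op.oplus, p) => {x | ∃ e ∈ ext p, x = (S, e, true)}
  | (S, Op.odot, p) => {x | ∃ e ∈ ext p, x = (S, e, false)}
  | (S, Op.ominus, p) => {x | ∃ e, e ∉ ext p ∧ x = (S, e, false)}

/-- Evaluate a dl-atom on given predicate extensions. -/
def DLA.eval (A : DLA Conc Pred Arg) (ext : Pred → Set Arg) : Prop :=
  A.entails {x | ∃ c ∈ A.inputs, x ∈ contrib ext c}

/-- `I ⊨_O A` for a dl-atom `A`. -/
def DLA.sat (A : DLA Conc Pred Arg) (I : Interp Pred Arg) : Prop := A.eval (extOf I)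

/-- A dl-atom is monotonic (relative to the program) if `I ⊨_O A` and `I ⊆ I'` imply `I' ⊨_O A`. -/
def DLA.Mono (A : DLA Conc Pred Arg) : Prop :=
  ∀ ⦃I J : Interp Pred Arg⦄, I ⊆ J → A.sat I → A.sat J

/-- A body element: an ordinary atom or a dl-atom. -/
abbrev BodyElem (Conc Pred Arg : Type) := Atom Pred Arg ⊕ DLA Conc Pred Arg

/-- Satisfaction of a body element: membership for atoms, dl-satisfaction for dl-atoms. -/
def satB (I : Interp Pred Arg) : BodyElem Conc Pred Arg → Prop
  | Sum.inl a => a ∈ I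
  | Sum.inr d => d.sat I

/-- A dl-rule `head ← Pos, not Neg`. -/
structure Rule (Conc Pred Arg : Type) where
  head : Atom Pred Arg
  pos : Set (BodyElem Conc Pred Arg)
  neg : Set (BodyElem Conc Pred Arg)

/-- A dl-program: a set of dl-rules (the ontology `O` is folded into the
entailment relation carried by each dl-atom). -/
structure Prog (Conc Pred Arg : Type) where
  rules : Set (Rule Conc Pred Arg)

/-- `I` satisfies the body of rule `r` relative to `O`. -/
def satBody (I : Interp Pred Arg) (r : Rule Conc Pred Arg) : Prop :=
  (∀ b ∈ r.pos, satB I b) ∧ (∀ b ∈ r.neg, ¬ satB I b)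

/-- `I` is a model of the dl-program. -/
def isModel (P : Prog Conc Pred Arg) (I : Interp Pred Arg) : Prop :=
  ∀ r ∈ P.rules, satBody I r → r.head ∈ I

/-- `I` is a supported model of the dl-program. -/
def Supported (P : Prog Conc Pred Arg) (I : Interp Pred Arg) : Prop :=
  isModel P I ∧ ∀ h ∈ I, ∃ r ∈ P.rules, r.head = h ∧ satBody I r

/-- `I` satisfies the completion `COMP(K)` relative to `O`. -/
def satComp (P : Prog Conc Pred Arg) (I : Interp Pred Arg) : Prop :=
  ∀ h : Atom Pred Arg, h ∈ I ↔ ∃ r ∈ P.rules, r.head = h ∧ satBody I r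

/-- A positive dl-program: no negation as failure, and all occurring dl-atoms monotonic. -/
def Positive (P : Prog Conc Pred Arg) : Prop :=
  (∀ r ∈ P.rules, r.neg = (∅ : Set (BodyElem Conc Pred Arg))) ∧
  (∀ r ∈ P.rules, ∀ d : DLA Conc Pred Arg, Sum.inr d ∈ r.pos ∪ r.neg → d.Mono)

/-- One-step consequence operator `γ_K`. -/
def gamma (P : Prog Conc Pred Arg) (J : Interp Pred Arg) : Interp Pred Arg :=
  {h | ∃ r ∈ P.rules, r.head = h ∧ ∀ b ∈ r.pos, satB J b}

/-- Least fixed point of the one-step consequence operator (Knaster–Tarski form). -/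
def lfpGamma (P : Prog Conc Pred Arg) : Interp Pred Arg :=
  ⋂₀ {J | gamma P J ⊆ J}

/-- The weak dl-transform `wP_O^I`. -/
def weakReduct (P : Prog Conc Pred Arg) (I : Interp Pred Arg) : Prog Conc Pred Arg :=
  ⟨{r' | ∃ r ∈ P.rules,
      (∀ d : DLA Conc Pred Arg, Sum.inr d ∈ r.pos → d.sat I) ∧
      (∀ b ∈ r.neg, ¬ satB I b) ∧
      r' = ⟨r.head, {b ∈ r.pos | ∃ a, b = Sum.inl a}, ∅⟩}⟩

/-- The strong dl-transform `sP_O^I`. -/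
def strongReduct (P : Prog Conc Pred Arg) (I : Interp Pred Arg) : Prog Conc Pred Arg :=
  ⟨{r' | ∃ r ∈ P.rules,
      (∀ d : DLA Conc Pred Arg, Sum.inr d ∈ r.pos → ¬ d.Mono → d.sat I) ∧
      (∀ b ∈ r.neg, ¬ satB I b) ∧
      r' = ⟨r.head,
            {b ∈ r.pos | (∃ a, b = Sum.inl a) ∨ ∃ d : DLA Conc Pred Arg, b = Sum.inr d ∧ d.Mono},
            ∅⟩}⟩

/-- `I` is a weak answer set: the least model of the weak dl-transform. -/
def WeakAS (P : Prog Conc Pred Arg) (I : Interp Pred Arg) : Prop :=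
  IsLeast {J | isModel (weakReduct P I) J} I

/-- `I` is a strong answer set: the least model of the strong dl-transform. -/
def StrongAS (P : Prog Conc Pred Arg) (I : Interp Pred Arg) : Prop :=
  IsLeast {J | isModel (strongReduct P I) J} I

/-- A loop of a directed graph: a nonempty vertex set through which a cycle passes,
visiting only and all its nodes (i.e., strongly connected via nonempty paths inside `L`). -/
def IsLoop {α : Type} (E : α → α → Prop) (L : Set α) : Prop :=
  L.Nonempty ∧ ∀ u ∈ L, ∀ v ∈ L,
    Relation.TransGen (fun a b => E a b ∧ a ∈ L ∧ b ∈ L) u v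

/-- A maximal loop. -/
def MaxLoop {α : Type} (E : α → α → Prop) (L : Set α) : Prop :=
  IsLoop E L ∧ ∀ L', IsLoop E L' → L ⊆ L' → L' = L

/-- A terminating loop: a maximal loop from which no other maximal loop is reachable. -/
def TermLoop {α : Type} (E : α → α → Prop) (L : Set α) : Prop :=
  MaxLoop E L ∧ ∀ L', MaxLoop E L' → L' ≠ L →
    ∀ u ∈ L, ∀ v ∈ L', ¬ Relation.ReflTransGen E u v

/-- Edge relation of the weak positive dependency graph. -/
def edgeWeak (P : Prog Conc Pred Arg) (u v : Atom Pred Arg) : Prop :=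
  ∃ r ∈ P.rules, r.head = u ∧ Sum.inl v ∈ r.pos

/-- The dl-atom mentions predicate `q` among its input predicates. -/
def mentionsPred (d : DLA Conc Pred Arg) (q : Pred) : Prop :=
  ∃ S op, (S, op, q) ∈ d.inputs

/-- Edge relation of the strong positive dependency graph. -/
def edgeStrong (P : Prog Conc Pred Arg) (u v : Atom Pred Arg) : Prop :=
  ∃ r ∈ P.rules, r.head = u ∧
    (Sum.inl v ∈ r.pos ∨
     ∃ d : DLA Conc Pred Arg, Sum.inr d ∈ r.pos ∧ d.Mono ∧ mentionsPred d v.1)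

/-- Satisfaction of the weak loop formula `wLF(L,K)` by `I` relative to `O`. -/
def satWLF (P : Prog Conc Pred Arg) (I : Interp Pred Arg) (L : Set (Atom Pred Arg)) : Prop :=
  (∃ a ∈ L, a ∈ I) →
    ∃ r ∈ P.rules, r.head ∈ L ∧ (∀ a ∈ L, Sum.inl a ∉ r.pos) ∧ satBody I r

/-- Predicate extensions used by the irrelevant formula `IF(A,L)`: predicates occurring
in `L` are renamed to `p_L`, whose extension (under the extension `I'` of `I`) consists of
the `p`-atoms of `I \ L`; other predicates keep their extension in `I`. -/
def extIF (I L : Interp Pred Arg) : Pred → Set Arg := fun p =>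
  {e | ((∃ e', (p, e') ∈ L) ∧ (p, e) ∈ I \ L) ∨ ((¬ ∃ e', (p, e') ∈ L) ∧ (p, e) ∈ I)}

/-- `I' ⊨_O IF(A,L)`: the irrelevant formula of `A` relative to `L`, evaluated under
the extension `I'` of `I` satisfying the renamed-predicate axioms. -/
def satIF (A : DLA Conc Pred Arg) (I L : Interp Pred Arg) : Prop :=
  A.eval (extIF I L)

/-- Satisfaction of `γ(A, L)`-transformed positive body elements
(monotonic dl-atoms are replaced by their irrelevant formulas). -/
def satGammaB (I L : Interp Pred Arg) : BodyElem Conc Pred Arg → Prop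
  | Sum.inl a => a ∈ I
  | Sum.inr d => (d.Mono → satIF d I L) ∧ (¬ d.Mono → d.sat I)

/-- Satisfaction of the strong loop formula `sLF(L,K)` by (the extension of) `I`. -/
def satSLF (P : Prog Conc Pred Arg) (I : Interp Pred Arg) (L : Set (Atom Pred Arg)) : Prop :=
  (∃ a ∈ L, a ∈ I) →
    ∃ r ∈ P.rules, r.head ∈ L ∧ (∀ a ∈ L, Sum.inl a ∉ r.pos) ∧
      (∀ b ∈ r.pos, satGammaB I L b) ∧ (∀ b ∈ r.neg, ¬ satB I b)

/-- `v` is a positive (nonmonotonic) dependency of dl-atom `d`. -/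
def posDep (d : DLA Conc Pred Arg) (v : Atom Pred Arg) : Prop :=
  ∃ I : Interp Pred Arg, ¬ d.sat I ∧ d.sat (I ∪ {v})

/-- `v` is a negative (nonmonotonic) dependency of dl-atom `d`. -/
def negDep (d : DLA Conc Pred Arg) (v : Atom Pred Arg) : Prop :=
  ∃ I : Interp Pred Arg, d.sat I ∧ ¬ d.sat (I ∪ {v})

/-- Edge relation of the canonical dependency graph. -/
def edgeCanon (P : Prog Conc Pred Arg) (u v : Atom Pred Arg) : Prop :=
  ∃ r ∈ P.rules, r.head = u ∧
    ((∃ b ∈ r.pos, ∃ I : Interp Pred Arg, ¬ satB I b ∧ satB (I ∪ {v}) b) ∨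
     (∃ b ∈ r.neg, ∃ I : Interp Pred Arg, satB I b ∧ ¬ satB (I ∪ {v}) b))

/-- Predicate extensions for the positive canonical irrelevant formula `pCF(A,L)`:
only predicates having an atom in `L` that is a positive dependency of `A` are renamed. -/
def extPCF (d : DLA Conc Pred Arg) (I L : Interp Pred Arg) : Pred → Set Arg := fun p =>
  {e | ((∃ e', (p, e') ∈ L ∧ posDep d (p, e')) ∧ (p, e) ∈ I \ L) ∨
       ((¬ ∃ e', (p, e') ∈ L ∧ posDep d (p, e')) ∧ (p, e) ∈ I)}

/-- Predicate extensions for the negative canonical irrelevant formula `nCF(A,L)`. -/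
def extNCF (d : DLA Conc Pred Arg) (I L : Interp Pred Arg) : Pred → Set Arg := fun p =>
  {e | ((∃ e', (p, e') ∈ L ∧ negDep d (p, e')) ∧ (p, e) ∈ I \ L) ∨
       ((¬ ∃ e', (p, e') ∈ L ∧ negDep d (p, e')) ∧ (p, e) ∈ I)}

/-- `I' ⊨_O pCF(A,L)`. -/
def satPCF (d : DLA Conc Pred Arg) (I L : Interp Pred Arg) : Prop := d.eval (extPCF d I L)

/-- `I' ⊨_O nCF(A,L)`. -/
def satNCF (d : DLA Conc Pred Arg) (I L : Interp Pred Arg) : Prop := d.eval (extNCF d I L)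

/-- `δ₁(A,L)`: nonmonotonic dl-atoms are replaced by `pCF(A,L)`; otherwise `γ(A,L)`. -/
def satDelta1 (I L : Interp Pred Arg) : BodyElem Conc Pred Arg → Prop
  | Sum.inl a => a ∈ I
  | Sum.inr d => (¬ d.Mono → satPCF d I L) ∧ (d.Mono → satIF d I L)

/-- `δ₂(B,L)`: nonmonotonic dl-atoms are replaced by `nCF(B,L)`; otherwise unchanged. -/
def satDelta2 (I L : Interp Pred Arg) : BodyElem Conc Pred Arg → Prop
  | Sum.inl a => a ∈ I
  | Sum.inr d => (¬ d.Mono → satNCF d I L) ∧ (d.Mono → d.sat I)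

/-- Satisfaction of the canonical loop formula `cLF(L,M,K)` by (the extension of) `I`. -/
def satCLF (P : Prog Conc Pred Arg) (I M : Interp Pred Arg) (L : Set (Atom Pred Arg)) : Prop :=
  (∃ a ∈ L, a ∈ I) →
    ∃ r ∈ P.rules, r.head ∈ L ∧ (∀ a ∈ L, Sum.inl a ∉ r.pos) ∧ satBody M r ∧
      (∀ b ∈ r.pos, satDelta1 I L b) ∧ (∀ b ∈ r.neg, ¬ satDelta2 I L b)

/-- `I` is a canonical answer set of the dl-program. -/
def CanonAS (P : Prog Conc Pred Arg) (I : Interp Pred Arg) : Prop :=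
  satComp P I ∧ ∀ L, IsLoop (edgeCanon P) L → satCLF P I I L

/-- A normal logic program: all body elements are ordinary atoms. -/
def Normal (P : Prog Conc Pred Arg) : Prop :=
  ∀ r ∈ P.rules, ∀ b ∈ r.pos ∪ r.neg, ∃ a : Atom Pred Arg, b = Sum.inl a

/-- The Gelfond–Lifschitz-style reduct: delete rules with a satisfied negated body
member, and delete all negated members from remaining rules. -/
def glReduct (P : Prog Conc Pred Arg) (I : Interp Pred Arg) : Prog Conc Pred Arg :=
  ⟨{r' | ∃ r ∈ P.rules, (∀ b ∈ r.neg, ¬ satB I b) ∧ r' = ⟨r.head, r.pos, ∅⟩}⟩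

/-! When all dl-atoms are monotonic, the strong dl-transform is the Gelfond–Lifschitz reduct, and
the canonical loop formula of `L` only asks that, if `L` meets `I`, some rule with head in `L`
has its positive body true in `I \ L` and its negative body false in `I`.

A least model `I` of the reduct satisfies this for every `L`, since otherwise `I \ L` would be a
smaller model; it also satisfies the completion. Conversely, let `I` satisfy the completion and
the loop formulas, and let `M ⊆ I` be the least model of the reduct. If `M ≠ I`, every atom of
`I \ M` is derived by a rule with a positive body element true in `I` and false in `M`; as `I`
is finite, adding atoms one at a time makes that element flip at a single atom, which is a
canonical edge back into `I \ M`. A minimal successor-closed subset of `I \ M` is then a loop,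
and the rule given by its loop formula fires in `M` with head outside `M`. -/

theorem exists_not_and_union_singleton_of_subset {α : Type} (P : Set α → Prop) {A B : Set α}
    (hB : B.Finite) (hAB : A ⊆ B) (hA : ¬ P A) (hPB : P B) :
    ∃ J, ∃ v ∈ B \ A, ¬ P J ∧ P (J ∪ {v}) := by
  suffices key : ∀ S : Set α, S.Finite → P (A ∪ S) → ∃ J, ∃ v ∈ S, ¬ P J ∧ P (J ∪ {v}) by
    exact key (B \ A) hB.sdiff (by rwa [Set.union_sdiff_cancel hAB])
  intro S hS
  induction S, hS using Set.Finite.induction_on with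
  | empty => simpa using hA
  | @insert v S _ _ ih =>
    intro hPvS
    by_cases hPS : P (A ∪ S)
    · obtain ⟨J, w, hw, hJ⟩ := ih hPS
      exact ⟨J, w, Set.mem_insert_of_mem v hw, hJ⟩
    · refine ⟨A ∪ S, v, Set.mem_insert v S, hPS, ?_⟩
      rwa [Set.union_assoc, Set.union_singleton]

/-- Take `L` minimal among the nonempty subsets of `X` closed under successors in `X`. -/
theorem exists_isLoop_of_forall_exists_succ {α : Type} {E : α → α → Prop} {X : Set α}
    (hX : X.Finite) (hne : X.Nonempty) (hsucc : ∀ x ∈ X, ∃ y ∈ X, E x y) :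
    ∃ L ⊆ X, IsLoop E L ∧ ∀ u ∈ L, ∀ v ∈ X, E u v → v ∈ L := by
  set closedSets := {L : Set α | L ⊆ X ∧ L.Nonempty ∧ ∀ u ∈ L, ∀ v ∈ X, E u v → v ∈ L}
  have hfin : closedSets.Finite := hX.finite_subsets.subset fun L hL => hL.1
  obtain ⟨L, ⟨hLX, hLne, hLclosed⟩, hLmin⟩ :=
    hfin.exists_minimal ⟨X, subset_rfl, hne, fun _ _ v hv _ => hv⟩
  refine ⟨L, hLX, ⟨hLne, fun u hu => ?_⟩, hLclosed⟩
  set reach := {v | Relation.TransGen (fun a b => E a b ∧ a ∈ L ∧ b ∈ L) u v}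
  have hreachL : reach ⊆ L := fun v hv => by
    obtain ⟨_, _, hlast⟩ := Relation.TransGen.tail'_iff.mp hv
    exact hlast.2.2
  have hreach : reach ∈ closedSets := by
    obtain ⟨w, hwX, huw⟩ := hsucc u (hLX hu)
    refine ⟨hreachL.trans hLX, ⟨w, .single ⟨huw, hu, hLclosed u hu w hwX huw⟩⟩, ?_⟩
    intro v hv w hwX hvw
    exact hv.tail ⟨hvw, hreachL hv, hLclosed v (hreachL hv) w hwX hvw⟩
  exact fun v hv => hLmin hreach hreachL hv

theorem DLA.mono_of_forall_not_ominus {d : DLA Conc Pred Arg}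
    (hnom : ∀ S p, (S, Op.ominus, p) ∉ d.inputs) (hent : Monotone d.entails) : d.Mono := by
  intro I J hIJ
  refine hent fun x ⟨c, hc, hxc⟩ => ⟨c, hc, ?_⟩
  obtain ⟨S, op, p⟩ := c
  cases op with
  | oplus =>
    obtain ⟨e, he, rfl⟩ := hxc
    exact ⟨e, hIJ he, rfl⟩
  | odot =>
    obtain ⟨e, he, rfl⟩ := hxc
    exact ⟨e, hIJ he, rfl⟩
  | ominus => exact absurd hc (hnom S p)

theorem extIF_eq (I L : Interp Pred Arg) : extIF I L = extOf (I \ L) := by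
  funext p
  ext e
  by_cases hp : ∃ e', (p, e') ∈ L
  · simp [extIF, extOf, hp]
  · have he : (p, e) ∉ L := fun h => hp ⟨e, h⟩
    simp [extIF, extOf, hp, he]

theorem satIF_iff (d : DLA Conc Pred Arg) (I L : Interp Pred Arg) :
    satIF d I L ↔ d.sat (I \ L) := by
  rw [satIF, DLA.sat, extIF_eq]

theorem isModel_glReduct_iff {K : Prog Conc Pred Arg} {I J : Interp Pred Arg} :
    isModel (glReduct K I) J ↔
      ∀ r ∈ K.rules, (∀ b ∈ r.neg, ¬ satB I b) → (∀ b ∈ r.pos, satB J b) → r.head ∈ J := by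
  constructor
  · exact fun hJ r hr hneg hpos => hJ ⟨r.head, r.pos, ∅⟩ ⟨r, hr, hneg, rfl⟩ ⟨hpos, by simp⟩
  · rintro hJ _ ⟨r, hr, hneg, rfl⟩ ⟨hpos, -⟩
    exact hJ r hr hneg hpos

theorem exists_edgeCanon_of_subset {K : Prog Conc Pred Arg} {r : Rule Conc Pred Arg}
    (hr : r ∈ K.rules) {b : BodyElem Conc Pred Arg} (hb : b ∈ r.pos) {A B : Interp Pred Arg}
    (hB : B.Finite) (hAB : A ⊆ B) (hA : ¬ satB A b) (hPB : satB B b) :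
    ∃ v ∈ B \ A, edgeCanon K r.head v := by
  obtain ⟨J, v, hv, hJ, hJv⟩ :=
    exists_not_and_union_singleton_of_subset (satB · b) hB hAB hA hPB
  exact ⟨v, hv, r, hr, rfl, Or.inl ⟨b, hb, J, hJ, hJv⟩⟩

theorem exists_edgeCanon_succ_of_satComp {K : Prog Conc Pred Arg} {I M : Interp Pred Arg}
    (hIfin : I.Finite) (hcomp : satComp K I) (hM : isModel (glReduct K I) M) (hMI : M ⊆ I) :
    ∀ y ∈ I \ M, ∃ v ∈ I \ M, edgeCanon K y v := by
  rintro y ⟨hyI, hyM⟩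
  obtain ⟨r, hr, rfl, hpos, hneg⟩ := (hcomp y).mp hyI
  obtain ⟨b, hb, hbM⟩ : ∃ b ∈ r.pos, ¬ satB M b := by
    by_contra! hall
    exact hyM (isModel_glReduct_iff.mp hM r hr hneg hall)
  exact exists_edgeCanon_of_subset hr hb hIfin hMI hbM (hpos b hb)

def ExtSupported (K : Prog Conc Pred Arg) (I L : Interp Pred Arg) : Prop :=
  ∃ r ∈ K.rules, r.head ∈ L ∧ (∀ b ∈ r.pos, satB (I \ L) b) ∧ ∀ b ∈ r.neg, ¬ satB I b

def Prog.DLMonotone (K : Prog Conc Pred Arg) : Prop :=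
  ∀ r ∈ K.rules, ∀ d : DLA Conc Pred Arg, Sum.inr d ∈ r.pos ∪ r.neg → d.Mono

namespace Prog.DLMonotone

variable {K : Prog Conc Pred Arg}

theorem satB_mono (hK : K.DLMonotone) {r : Rule Conc Pred Arg} (hr : r ∈ K.rules)
    {b : BodyElem Conc Pred Arg} (hb : b ∈ r.pos) {J J' : Interp Pred Arg} (hJJ' : J ⊆ J')
    (hJ : satB J b) : satB J' b := by
  cases b with
  | inl a => exact hJJ' hJ
  | inr d => exact hK r hr d (Or.inl hb) hJJ' hJ

theorem strongReduct_eq_glReduct (hK : K.DLMonotone) (I : Interp Pred Arg) :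
    strongReduct K I = glReduct K I := by
  have hpos : ∀ r ∈ K.rules, {b ∈ r.pos | (∃ a, b = Sum.inl a) ∨
      ∃ d : DLA Conc Pred Arg, b = Sum.inr d ∧ d.Mono} = r.pos := by
    intro r hr
    refine Set.sep_eq_self_iff_mem_true.mpr fun b hb => ?_
    cases b with
    | inl a => exact Or.inl ⟨a, rfl⟩
    | inr d => exact Or.inr ⟨d, rfl, hK r hr d (Or.inl hb)⟩
  simp only [strongReduct, glReduct, Prog.mk.injEq]
  ext r'
  constructor
  · rintro ⟨r, hr, -, hneg, rfl⟩
    exact ⟨r, hr, hneg, by rw [hpos r hr]⟩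
  · rintro ⟨r, hr, hneg, rfl⟩
    exact ⟨r, hr, fun d hd hnm => absurd (hK r hr d (Or.inl hd)) hnm, hneg, by rw [hpos r hr]⟩

theorem isModel_sInter_glReduct (hK : K.DLMonotone) (I : Interp Pred Arg) :
    isModel (glReduct K I) (⋂₀ {J | isModel (glReduct K I) J}) := by
  refine isModel_glReduct_iff.mpr fun r hr hneg hpos => Set.mem_sInter.mpr fun J hJ => ?_
  exact isModel_glReduct_iff.mp hJ r hr hneg fun b hb =>
    hK.satB_mono hr hb (Set.sInter_subset_of_mem hJ) (hpos b hb)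

theorem satCLF_iff (hK : K.DLMonotone) (I L : Interp Pred Arg) :
    satCLF K I I L ↔ ((∃ a ∈ L, a ∈ I) → ExtSupported K I L) := by
  refine imp_congr_right fun _ => exists_congr fun r => and_congr_right fun hr => ?_
  constructor
  · rintro ⟨hhead, hnotL, -, hδ₁, hδ₂⟩
    refine ⟨hhead, fun b hb => ?_, fun b hb hbI => hδ₂ b hb ?_⟩
    · cases b with
      | inl a => exact ⟨hδ₁ _ hb, fun haL => hnotL a haL hb⟩
      | inr d => exact (satIF_iff d I L).mp ((hδ₁ _ hb).2 (hK r hr d (Or.inl hb)))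
    · cases b with
      | inl a => exact hbI
      | inr d => exact ⟨fun hnm => absurd (hK r hr d (Or.inr hb)) hnm, fun _ => hbI⟩
  · rintro ⟨hhead, hpos, hneg⟩
    have hposI : ∀ b ∈ r.pos, satB I b := fun b hb =>
      hK.satB_mono hr hb Set.sdiff_subset (hpos b hb)
    refine ⟨hhead, fun a haL ha => (hpos _ ha).2 haL, ⟨hposI, hneg⟩, fun b hb => ?_,
      fun b hb hδ => ?_⟩
    · cases b with
      | inl a => exact hposI _ hb
      | inr d => exact ⟨fun hnm => absurd (hK r hr d (Or.inl hb)) hnm,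
          fun _ => (satIF_iff d I L).mpr (hpos _ hb)⟩
    · cases b with
      | inl a => exact hneg _ hb hδ
      | inr d => exact hneg _ hb (hδ.2 (hK r hr d (Or.inr hb)))

theorem satComp_of_isLeast (hK : K.DLMonotone) {I : Interp Pred Arg}
    (hI : IsLeast {J | isModel (glReduct K I) J} I) : satComp K I := by
  intro h
  constructor
  · intro hhI
    by_contra hunsupp
    suffices hmodel : isModel (glReduct K I) (I \ {h}) from (hI.2 hmodel hhI).2 rfl
    refine isModel_glReduct_iff.mpr fun r hr hneg hpos => ?_
    have hposI : ∀ b ∈ r.pos, satB I b := fun b hb =>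
      hK.satB_mono hr hb Set.sdiff_subset (hpos b hb)
    exact ⟨isModel_glReduct_iff.mp hI.1 r hr hneg hposI,
      fun hrh => hunsupp ⟨r, hr, hrh, hposI, hneg⟩⟩
  · rintro ⟨r, hr, rfl, hpos, hneg⟩
    exact isModel_glReduct_iff.mp hI.1 r hr hneg hpos

/-- `I \ L` is not a model of the reduct, and a rule it violates supports `L`. -/
theorem extSupported_of_isLeast (hK : K.DLMonotone) {I : Interp Pred Arg}
    (hI : IsLeast {J | isModel (glReduct K I) J} I) {L : Interp Pred Arg}
    (hLI : ∃ a ∈ L, a ∈ I) : ExtSupported K I L := by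
  obtain ⟨a, haL, haI⟩ := hLI
  have hnotModel : ¬ isModel (glReduct K I) (I \ L) := fun hmodel => (hI.2 hmodel haI).2 haL
  simp only [isModel_glReduct_iff, not_forall] at hnotModel
  obtain ⟨r, hr, hneg, hpos, hhead⟩ := hnotModel
  have hheadI := isModel_glReduct_iff.mp hI.1 r hr hneg fun b hb =>
    hK.satB_mono hr hb Set.sdiff_subset (hpos b hb)
  exact ⟨r, hr, not_not.mp fun hnL => hhead ⟨hheadI, hnL⟩, hpos, hneg⟩

theorem canonAS_of_strongAS (hK : K.DLMonotone) {I : Interp Pred Arg} (hI : StrongAS K I) :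
    CanonAS K I := by
  rw [StrongAS, hK.strongReduct_eq_glReduct] at hI
  exact ⟨hK.satComp_of_isLeast hI,
    fun L _ => (hK.satCLF_iff I L).mpr (hK.extSupported_of_isLeast hI)⟩

theorem strongAS_of_canonAS [Finite (Atom Pred Arg)] (hK : K.DLMonotone) {I : Interp Pred Arg}
    (hI : CanonAS K I) : StrongAS K I := by
  obtain ⟨hcomp, hloops⟩ := hI
  rw [StrongAS, hK.strongReduct_eq_glReduct]
  set M := ⋂₀ {J | isModel (glReduct K I) J}
  have hImodel : isModel (glReduct K I) I := isModel_glReduct_iff.mpr fun r hr hneg hpos =>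
    (hcomp r.head).mpr ⟨r, hr, rfl, hpos, hneg⟩
  have hMmodel : isModel (glReduct K I) M := hK.isModel_sInter_glReduct I
  have hMI : M ⊆ I := Set.sInter_subset_of_mem hImodel
  suffices hIM : I ⊆ M from ⟨hImodel, fun J hJ => hIM.trans (Set.sInter_subset_of_mem hJ)⟩
  by_contra hIM
  obtain ⟨L, hLX, hloop, hLclosed⟩ := exists_isLoop_of_forall_exists_succ (Set.toFinite (I \ M))
    (Set.sdiff_nonempty.mpr hIM)
    (exists_edgeCanon_succ_of_satComp (Set.toFinite I) hcomp hMmodel hMI)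
  obtain ⟨x, hxL⟩ := hloop.1
  obtain ⟨r, hr, hheadL, hpos, hneg⟩ :=
    (hK.satCLF_iff I L).mp (hloops L hloop) ⟨x, hxL, (hLX hxL).1⟩
  have hML : M ⊆ I \ L := fun m hm => ⟨hMI hm, fun hmL => (hLX hmL).2 hm⟩
  -- otherwise a canonical edge would leave `L` for `(I \ L) \ M ⊆ I \ M`
  have hposM : ∀ b ∈ r.pos, satB M b := fun b hb => by
    by_contra hbM
    obtain ⟨v, ⟨⟨hvI, hvL⟩, hvM⟩, hedge⟩ :=
      exists_edgeCanon_of_subset hr hb (Set.toFinite _) hML hbM (hpos b hb)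
    exact hvL (hLclosed r.head hheadL v ⟨hvI, hvM⟩ hedge)
  exact (hLX hheadL).2 (isModel_glReduct_iff.mp hMmodel r hr hneg hposM)

end Prog.DLMonotone

/-- If K mentions no occurrence of the constraining operator ⊖
(so, the underlying entailment being classical/monotone, all dl-atoms of P are
monotonic), then I is a canonical answer set of K iff I is a strong answer set of K. -/
theorem stmt18 {Conc Pred Arg : Type} [Fintype Pred] [Fintype Arg]
    (K : Prog Conc Pred Arg)
    (hno : ∀ r ∈ K.rules, ∀ d : DLA Conc Pred Arg, Sum.inr d ∈ r.pos ∪ r.neg →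
      (∀ S p, (S, Op.ominus, p) ∉ d.inputs) ∧ Monotone d.entails)
    (I : Interp Pred Arg) :
    CanonAS K I ↔ StrongAS K I := by
  have hK : K.DLMonotone := fun r hr d hd =>
    DLA.mono_of_forall_not_ominus (hno r hr d hd).1 (hno r hr d hd).2
  exact ⟨hK.strongAS_of_canonAS, hK.canonAS_of_strongAS⟩

end DLP
end

section
/- If a dl-program K = (O,P) contains no nonmonotonic dl-atoms, then the strong dl-transform sP_O^I coincides with the Gelfond–Lifschitz-style reduct that only removes rules with satisfied negated bodies and deletes negated members, and every strong answer set of K is a minimal model of K. -/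
namespace DLP

variable {Conc Pred Arg : Type}

/-! When every dl-atom of `K` is monotonic, the strong dl-transform keeps every positive body
member, so it is the Gelfond–Lifschitz reduct. A model `J ⊆ I` of `K` is then a model of the
reduct relative to `I`: a negated member false at `I` is false at the smaller `J` by
monotonicity. As `I` is the least model of that reduct, `I ⊆ J`. -/

lemma satB_mono {I J : Interp Pred Arg} {b : BodyElem Conc Pred Arg}
    (hb : ∀ d : DLA Conc Pred Arg, b = Sum.inr d → d.Mono) (hIJ : I ⊆ J) (h : satB I b) :
    satB J b := by
  cases b with
  | inl a => exact hIJ h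
  | inr d => exact hb d rfl hIJ h

lemma monoFilter_eq_self {s : Set (BodyElem Conc Pred Arg)}
    (hs : ∀ d : DLA Conc Pred Arg, Sum.inr d ∈ s → d.Mono) :
    {b ∈ s | (∃ a, b = Sum.inl a) ∨ ∃ d : DLA Conc Pred Arg, b = Sum.inr d ∧ d.Mono} = s := by
  refine Set.sep_eq_self_iff_mem_true.mpr fun b hb => ?_
  cases b with
  | inl a => exact Or.inl ⟨a, rfl⟩
  | inr d => exact Or.inr ⟨d, rfl, hs d hb⟩

theorem strongReduct_eq_glReduct {P : Prog Conc Pred Arg}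
    (hmono : ∀ r ∈ P.rules, ∀ d : DLA Conc Pred Arg, Sum.inr d ∈ r.pos → d.Mono)
    (I : Interp Pred Arg) : strongReduct P I = glReduct P I := by
  refine congrArg Prog.mk (Set.ext fun r' => ?_)
  constructor
  · rintro ⟨r, hr, -, hneg, rfl⟩
    exact ⟨r, hr, hneg, by rw [monoFilter_eq_self (hmono r hr)]⟩
  · rintro ⟨r, hr, hneg, rfl⟩
    exact ⟨r, hr, fun d hd hnm => absurd (hmono r hr d hd) hnm, hneg,
      by rw [monoFilter_eq_self (hmono r hr)]⟩

lemma isModel_of_isModel_glReduct {P : Prog Conc Pred Arg} {I : Interp Pred Arg}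
    (h : isModel (glReduct P I) I) : isModel P I :=
  fun r hr ⟨hpos, hneg⟩ =>
    h ⟨r.head, r.pos, ∅⟩ ⟨r, hr, hneg, rfl⟩ ⟨hpos, fun _ hb => absurd hb (Set.notMem_empty _)⟩

lemma isModel_glReduct_of_subset {P : Prog Conc Pred Arg} {I J : Interp Pred Arg}
    (hmono : ∀ r ∈ P.rules, ∀ d : DLA Conc Pred Arg, Sum.inr d ∈ r.neg → d.Mono)
    (hJ : isModel P J) (hJI : J ⊆ I) : isModel (glReduct P I) J := by
  rintro r' ⟨r, hr, hneg, rfl⟩ ⟨hpos, -⟩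
  refine hJ r hr ⟨hpos, fun b hb hJb => hneg b hb ?_⟩
  exact satB_mono (fun d hd => hmono r hr d (hd ▸ hb)) hJI hJb

/-- If K contains no nonmonotonic dl-atoms, the strong dl-transform
coincides with the Gelfond–Lifschitz-style reduct, and every strong answer set of K
is a minimal model of K. -/
theorem stmt19 {Conc Pred Arg : Type} (K : Prog Conc Pred Arg)
    (hmono : ∀ r ∈ K.rules, ∀ d : DLA Conc Pred Arg, Sum.inr d ∈ r.pos ∪ r.neg → d.Mono) :
    (∀ I : Interp Pred Arg, strongReduct K I = glReduct K I) ∧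
    (∀ I : Interp Pred Arg, StrongAS K I →
      isModel K I ∧ ∀ J : Interp Pred Arg, isModel K J → J ⊆ I → J = I) := by
  have hred := strongReduct_eq_glReduct fun r hr d hd => hmono r hr d (Or.inl hd)
  refine ⟨hred, fun I hI => ?_⟩
  rw [StrongAS, hred] at hI
  obtain ⟨hImodel, hleast⟩ := hI
  refine ⟨isModel_of_isModel_glReduct hImodel, fun J hJ hJI => ?_⟩
  exact hJI.antisymm <| hleast <|
    isModel_glReduct_of_subset (fun r hr d hd => hmono r hr d (Or.inr hd)) hJ hJI

end DLP
end
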